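/- Let A = (Q, d, T_u, T_f, T_s, ∅) be an ordinary ABVASS, Q_ℓ a finite set of states, and T(A) the associated theory. Then for all configurations (q, v) ∈ Q × ℕ^d, the root judgement A, Q_ℓ ▷_ℓ q, v holds under the lossy semantics if and only if the sequent ⊢ θ(q, v), ?Q_ℓ is provable in LLW+T(A). -/

import Mathlib

/-- An alternating branching VASS with full zero tests (ABVASS₀):
states `Q`, counters indexed by `ι`, with unary, fork, split, and
full-zero-test rules. -/
structure ABVASS (Q ι : Type) where
  Tu : Set (Q × (ι → ℤ) × Q)
  Tf : Set (Q × Q × Q)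
  Ts : Set (Q × Q × Q)
  Tz : Set (Q × Q)

/-- Configurations: a state together with a vector of naturals. -/
abbrev Config (Q ι : Type) := Q × (ι → ℕ)

/-- Finite deduction trees labelled by configurations, with unary and
binary internal nodes. -/
inductive DTree (Q ι : Type) where
  | leaf : Config Q ι → DTree Q ι
  | node1 : Config Q ι → DTree Q ι → DTree Q ι
  | node2 : Config Q ι → DTree Q ι → DTree Q ι → DTree Q ι

namespace DTree

variable {Q ι : Type}

/-- The root label of a deduction tree. -/
def root : DTree Q ι → Config Q ι
  | .leaf c => c
  | .node1 c _ => c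
  | .node2 c _ _ => c

/-- Height: the maximum number of edges from the root to a leaf. -/
def height : DTree Q ι → ℕ
  | .leaf _ => 0
  | .node1 _ t => t.height + 1
  | .node2 _ t₁ t₂ => max t₁.height t₂.height + 1

/-- The list of leaf labels. -/
def leaves : DTree Q ι → List (Config Q ι)
  | .leaf c => [c]
  | .node1 _ t => t.leaves
  | .node2 _ t₁ t₂ => t₁.leaves ++ t₂.leaves

end DTree

variable {Q ι : Type}

/-- Unary rule, applied top-down: from `(q, v)` derive `(q₁, v + u)`,
provided `v + u` is non-negative. -/
def UnaryStep (A : ABVASS Q ι) (c c' : Config Q ι) : Prop :=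
  ∃ u, (c.1, u, c'.1) ∈ A.Tu ∧ ∀ i, (c'.2 i : ℤ) = (c.2 i : ℤ) + u i

/-- Full zero test: from `(q, 0)` derive `(q₁, 0)`. -/
def ZeroStep (A : ABVASS Q ι) (c c' : Config Q ι) : Prop :=
  (c.1, c'.1) ∈ A.Tz ∧ c.2 = (fun _ => 0) ∧ c'.2 = (fun _ => 0)

/-- Fork (children copy the parent's vector) or split (the parent's
vector is a sum of the children's). -/
def BinStep (A : ABVASS Q ι) (c c₁ c₂ : Config Q ι) : Prop :=
  ((c.1, c₁.1, c₂.1) ∈ A.Tf ∧ c₁.2 = c.2 ∧ c₂.2 = c.2) ∨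
  ((c.1, c₁.1, c₂.1) ∈ A.Ts ∧ c.2 = c₁.2 + c₂.2)

/-- A tree is a valid deduction tree when every internal node's children
are obtained by one of the permitted steps. -/
inductive ValidTree (step1 : Config Q ι → Config Q ι → Prop)
    (step2 : Config Q ι → Config Q ι → Config Q ι → Prop) : DTree Q ι → Prop
  | leaf (c : Config Q ι) : ValidTree step1 step2 (.leaf c)
  | one {c : Config Q ι} {t : DTree Q ι} :
      step1 c t.root → ValidTree step1 step2 t → ValidTree step1 step2 (.node1 c t)
  | two {c : Config Q ι} {t₁ t₂ : DTree Q ι} :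
      step2 c t₁.root t₂.root → ValidTree step1 step2 t₁ → ValidTree step1 step2 t₂ →
      ValidTree step1 step2 (.node2 c t₁ t₂)

/-- Deduction trees of an ABVASS₀ (standard semantics). -/
def IsDeduction (A : ABVASS Q ι) : DTree Q ι → Prop :=
  ValidTree (fun c c' => UnaryStep A c c' ∨ ZeroStep A c c') (BinStep A)

/-- Loss rule of the lossy semantics: from `(q, v)` derive `(q, v - e_i)`. -/
def LossStep (c c' : Config Q ι) : Prop :=
  c'.1 = c.1 ∧ ∃ i, c.2 i = c'.2 i + 1 ∧ ∀ j, j ≠ i → c.2 j = c'.2 j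

/-- Propositional linear logic formulas in negation normal form over
atoms `α`. -/
inductive Fm (α : Type) where
  | pos : α → Fm α
  | neg : α → Fm α
  | parr : Fm α → Fm α → Fm α
  | tensor : Fm α → Fm α → Fm α
  | bot : Fm α
  | one : Fm α
  | wth : Fm α → Fm α → Fm α
  | oplus : Fm α → Fm α → Fm α
  | top : Fm α
  | zero : Fm α
  | bang : Fm α → Fm α
  | quest : Fm α → Fm α

variable {α : Type}

/-- Negation, via the De Morgan dualities. -/
def Fm.dual : Fm α → Fm α
  | .pos a => .neg a
  | .neg a => .pos a
  | .parr f g => .tensor f.dual g.dual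
  | .tensor f g => .parr f.dual g.dual
  | .bot => .one
  | .one => .bot
  | .wth f g => .oplus f.dual g.dual
  | .oplus f g => .wth f.dual g.dual
  | .top => .zero
  | .zero => .top
  | .bang f => .quest f.dual
  | .quest f => .bang f.dual

/-- MALL formulas: no exponential connectives. -/
def Fm.noExp : Fm α → Prop
  | .pos _ => True
  | .neg _ => True
  | .parr f g => f.noExp ∧ g.noExp
  | .tensor f g => f.noExp ∧ g.noExp
  | .bot => True
  | .one => True
  | .wth f g => f.noExp ∧ g.noExp
  | .oplus f g => f.noExp ∧ g.noExp
  | .top => True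
  | .zero => True
  | .bang _ => False
  | .quest _ => False

/-- A theory axiom `C, p₁⊥, …, p_m⊥`: a formula `C` together with the
list of atoms `p₁, …, p_m`. -/
abbrev LAxiom (α : Type) := Fm α × List α

/-- The sequent `⊢ C, p₁⊥, …, p_m⊥` of an axiom. -/
def axSeq (t : LAxiom α) : Multiset (Fm α) :=
  t.1 ::ₘ (t.2.map Fm.neg : Multiset (Fm α))

/-- Provability in affine linear logic LLW (logical weakening replaced by
structural weakening) extended with a theory `T`: the rules of LLW, the
axiom rule, and the directed cut. -/
inductive LLWT (T : Set (LAxiom α)) : Multiset (Fm α) → Prop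
  | init (f : Fm α) : LLWT T {f, f.dual}
  | cut {Γ Δ : Multiset (Fm α)} (f : Fm α) :
      LLWT T (f ::ₘ Γ) → LLWT T (f.dual ::ₘ Δ) → LLWT T (Γ + Δ)
  | parr {Γ : Multiset (Fm α)} (f g : Fm α) :
      LLWT T (f ::ₘ g ::ₘ Γ) → LLWT T (.parr f g ::ₘ Γ)
  | tensor {Γ Δ : Multiset (Fm α)} (f g : Fm α) :
      LLWT T (f ::ₘ Γ) → LLWT T (g ::ₘ Δ) → LLWT T (.tensor f g ::ₘ (Γ + Δ))
  | bot {Γ : Multiset (Fm α)} : LLWT T Γ → LLWT T (.bot ::ₘ Γ)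
  | one : LLWT T {Fm.one}
  | wth {Γ : Multiset (Fm α)} (f g : Fm α) :
      LLWT T (f ::ₘ Γ) → LLWT T (g ::ₘ Γ) → LLWT T (.wth f g ::ₘ Γ)
  | oplus₁ {Γ : Multiset (Fm α)} (f g : Fm α) :
      LLWT T (f ::ₘ Γ) → LLWT T (.oplus f g ::ₘ Γ)
  | oplus₂ {Γ : Multiset (Fm α)} (f g : Fm α) :
      LLWT T (g ::ₘ Γ) → LLWT T (.oplus f g ::ₘ Γ)
  | top (Γ : Multiset (Fm α)) : LLWT T (.top ::ₘ Γ)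
  | qD {Γ : Multiset (Fm α)} (f : Fm α) :
      LLWT T (f ::ₘ Γ) → LLWT T (.quest f ::ₘ Γ)
  | weak {Γ : Multiset (Fm α)} (f : Fm α) :
      LLWT T Γ → LLWT T (f ::ₘ Γ)
  | qC {Γ : Multiset (Fm α)} (f : Fm α) :
      LLWT T (.quest f ::ₘ .quest f ::ₘ Γ) → LLWT T (.quest f ::ₘ Γ)
  | qP {Γ : Multiset (Fm α)} (f : Fm α) :
      (∀ g ∈ Γ, ∃ h, g = Fm.quest h) →
      LLWT T (f ::ₘ Γ) → LLWT T (.bang f ::ₘ Γ)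
  | ax {t : LAxiom α} : t ∈ T → LLWT T (axSeq t)
  | dcut {Δ : Multiset (Fm α)} {t : LAxiom α} :
      t ∈ T → LLWT T ((t.1).dual ::ₘ Δ) →
      LLWT T ((t.2.map Fm.neg : Multiset (Fm α)) + Δ)

/-- The unit vector `e_i` in dimension `d`. -/
def unit {d : ℕ} (i : Fin d) : Fin d → ℤ := fun j => if j = i then 1 else 0

/-- The sequent `θ(q, v) = q⊥, (e₁⊥)^{v 1}, …, (e_d⊥)^{v d}` encoding a
configuration, over the atoms `Q ⊕ Fin d`. -/
def theta {Q : Type} {d : ℕ} (q : Q) (v : Fin d → ℕ) :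
    Multiset (Fm (Q ⊕ Fin d)) :=
  Fm.neg (Sum.inl q) ::ₘ
    (Finset.univ : Finset (Fin d)).sum
      (fun i => Multiset.replicate (v i) (Fm.neg (Sum.inr i)))

/-- The theory `T(A)` associated with an ordinary ABVASS `A`: the axiom
`q⊥, q₁ ⊗ e_i` for each rule `q →^{+e_i} q₁`; the axiom `q⊥, e_i⊥, q₁`
for each rule `q →^{-e_i} q₁`; the axiom `q⊥, q₁ ⊕ q₂` for each fork
`q → q₁ ∧ q₂`; and the axiom `q⊥, q₁ ⅋ q₂` for each split `q → q₁ + q₂`. -/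
def thAx {Q : Type} {d : ℕ} (A : ABVASS Q (Fin d)) :
    Set (LAxiom (Q ⊕ Fin d)) :=
  {t | (∃ q i q₁, (q, unit i, q₁) ∈ A.Tu ∧
          t = (Fm.tensor (Fm.pos (Sum.inl q₁)) (Fm.pos (Sum.inr i)), [Sum.inl q])) ∨
       (∃ q i q₁, (q, -unit i, q₁) ∈ A.Tu ∧
          t = (Fm.pos (Sum.inl q₁), [Sum.inl q, Sum.inr i])) ∨
       (∃ q q₁ q₂, (q, q₁, q₂) ∈ A.Tf ∧
          t = (Fm.oplus (Fm.pos (Sum.inl q₁)) (Fm.pos (Sum.inl q₂)), [Sum.inl q])) ∨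
       (∃ q q₁ q₂, (q, q₁, q₂) ∈ A.Ts ∧
          t = (Fm.parr (Fm.pos (Sum.inl q₁)) (Fm.pos (Sum.inl q₂)), [Sum.inl q]))}

/-- An ABVASS is ordinary if every unary rule vector is `+e_i` or `-e_i`. -/
def Ordinary {Q : Type} {d : ℕ} (A : ABVASS Q (Fin d)) : Prop :=
  ∀ r ∈ A.Tu, ∃ i, r.2.1 = unit i ∨ r.2.1 = -unit i

/-!
Trees to proofs: induction on the deduction tree. Each rule of `A` is simulated by a directed cut
against its axiom in `T(A)`; a split duplicates the context `?Q_ℓ`, which is contracted again; a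
loss is a weakening; a leaf `(q, 0)` with `q ∈ Q_ℓ` is `q⊥, ?q` by dereliction.

Proofs to trees: phase semantics. In the monoid of multisets of atoms take as pole the multisets
derivable by the rules of `A` read on multisets (`AtomDerivable`), where a multiset may contain
several states and any atom may be weakened in. The pole is upward closed, which validates
weakening, and it validates every axiom of `T(A)`. With `{0}` as the set of idempotents,
`!f` is then interpreted either as everything or as the pole, which validates contraction and
promotion. So `⊢ θ(q, v), ?Q_ℓ` holds in the model, the multiset `q + v` lies in the pole, and a
derivation of a multiset with a single state unfolds to a lossy deduction tree.
-/

open Pointwise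

theorem Fm.dual_dual (f : Fm α) : f.dual.dual = f := by
  induction f <;> simp [Fm.dual, *]

section Phase

variable {M : Type*} [AddCommMonoid M]

def orth (B X : Set M) : Set M := {m | ∀ x ∈ X, m + x ∈ B}

variable {B X Y : Set M}

theorem mem_orth {m : M} : m ∈ orth B X ↔ ∀ x ∈ X, m + x ∈ B := Iff.rfl

theorem mem_orth_orth_singleton {x y : M} :
    x ∈ orth B (orth B {y}) ↔ ∀ z, z + y ∈ B → x + z ∈ B := by
  simp [mem_orth]

theorem orth_anti (h : X ⊆ Y) : orth B Y ⊆ orth B X := fun _ hm x hx => hm x (h hx)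

theorem subset_orth_orth : X ⊆ orth B (orth B X) :=
  fun x hx m hm => add_comm m x ▸ hm x hx

@[simp]
theorem orth_orth_orth : orth B (orth B (orth B X)) = orth B X :=
  (orth_anti subset_orth_orth).antisymm subset_orth_orth

theorem orth_orth_subset (h : X ⊆ orth B Y) : orth B (orth B X) ⊆ orth B Y :=
  orth_orth_orth (X := Y) ▸ orth_anti (orth_anti h)

theorem orth_union : orth B (X ∪ Y) = orth B X ∩ orth B Y := by
  ext m
  simp only [mem_orth, Set.mem_union, Set.mem_inter_iff, or_imp, forall_and]

theorem orth_add_orth_orth : orth B (X + orth B (orth B Y)) = orth B (X + Y) := by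
  refine (orth_anti (Set.add_subset_add_left subset_orth_orth)).antisymm ?_
  rintro m hm - ⟨x, hx, y, hy, rfl⟩
  have hmx : m + x ∈ orth B Y := fun y' hy' => add_assoc m x y' ▸ hm _ (Set.add_mem_add hx hy')
  rw [← add_assoc, add_comm]
  exact hy _ hmx

@[simp]
theorem orth_orth_orth_add_orth_orth :
    orth B (orth B (orth B X) + orth B (orth B Y)) = orth B (X + Y) := by
  rw [orth_add_orth_orth, add_comm, orth_add_orth_orth, add_comm]

@[simp]
theorem orth_orth_orth_union_orth_orth :
    orth B (orth B (orth B X) ∪ orth B (orth B Y)) = orth B (X ∪ Y) := by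
  simp only [orth_union, orth_orth_orth]

theorem orth_singleton_zero : orth B {0} = B := by
  ext m
  simp [mem_orth]

theorem orth_empty : orth B ∅ = Set.univ := by
  ext m
  simp [mem_orth]

theorem orth_univ (hB : ∀ m ∈ B, ∀ x, x + m ∈ B) : orth B Set.univ = B :=
  Set.Subset.antisymm (fun m hm => add_zero m ▸ hm 0 trivial)
    fun m hm x _ => add_comm x m ▸ hB m hm x

theorem orth_self (hB : ∀ m ∈ B, ∀ x, x + m ∈ B) : orth B B = Set.univ :=
  Set.eq_univ_of_forall fun m x hx => hB x hx m

theorem add_subset_of_left_subset (hB : ∀ m ∈ B, ∀ x, x + m ∈ B) (h : X ⊆ B) :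
    X + Y ⊆ B :=
  Set.add_subset_iff.2 fun x hx y _ => add_comm y x ▸ hB x (h hx) y

theorem add_subset_orth_orth_add :
    orth B (orth B X) + orth B (orth B Y) ⊆ orth B (orth B (X + Y)) :=
  calc _ ⊆ orth B (orth B (orth B (orth B X) + orth B (orth B Y))) := subset_orth_orth
    _ = _ := by rw [orth_orth_orth_add_orth_orth]

variable (B) (e : α → M)

def interp : Fm α → Set M
  | .pos a => orth B (orth B {e a})
  | .neg a => orth B {e a}
  | .parr f g => orth B (orth B (interp f) + orth B (interp g))
  | .tensor f g => orth B (orth B (interp f + interp g))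
  | .bot => orth B {0}
  | .one => orth B (orth B {0})
  | .wth f g => orth B (orth B (interp f) ∪ orth B (interp g))
  | .oplus f g => orth B (orth B (interp f ∪ interp g))
  | .top => orth B ∅
  | .zero => orth B (orth B ∅)
  | .bang f => orth B (orth B ({0} ∩ interp f))
  | .quest f => orth B ({0} ∩ orth B (interp f))

def interpDual (Γ : Multiset (Fm α)) : Set M := (Γ.map fun f => interp B e f.dual).sum

def Valid (Γ : Multiset (Fm α)) : Prop := interpDual B e Γ ⊆ B

variable {B e}

@[simp]
theorem orth_orth_interp (f : Fm α) : orth B (orth B (interp B e f)) = interp B e f := by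
  cases f <;> exact orth_orth_orth

theorem interp_dual (f : Fm α) : interp B e f.dual = orth B (interp B e f) := by
  induction f <;> simp [Fm.dual, interp, *]

theorem interp_bang_of_zero_mem (hB : ∀ m ∈ B, ∀ x, x + m ∈ B) {f : Fm α}
    (h : 0 ∈ interp B e f) : interp B e (.bang f) = Set.univ := by
  rw [interp, Set.singleton_inter_of_mem h, orth_singleton_zero, orth_self hB]

theorem interp_bang_of_zero_notMem (hB : ∀ m ∈ B, ∀ x, x + m ∈ B) {f : Fm α}
    (h : 0 ∉ interp B e f) : interp B e (.bang f) = B := by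
  rw [interp, Set.singleton_inter_of_notMem h, orth_empty, orth_univ hB]

@[simp]
theorem interpDual_zero : interpDual B e 0 = 0 := by simp [interpDual]

@[simp]
theorem interpDual_cons (f : Fm α) (Γ : Multiset (Fm α)) :
    interpDual B e (f ::ₘ Γ) = orth B (interp B e f) + interpDual B e Γ := by
  simp [interpDual, interp_dual]

@[simp]
theorem interpDual_add (Γ Δ : Multiset (Fm α)) :
    interpDual B e (Γ + Δ) = interpDual B e Γ + interpDual B e Δ := by
  simp [interpDual]

theorem interpDual_quest_cons (f : Fm α) (Γ : Multiset (Fm α)) :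
    interpDual B e (.quest f ::ₘ Γ) = interp B e (.bang f.dual) + interpDual B e Γ := by
  simp [interpDual, Fm.dual]

theorem valid_cons_iff {f : Fm α} {Γ : Multiset (Fm α)} :
    Valid B e (f ::ₘ Γ) ↔ interpDual B e Γ ⊆ interp B e f := by
  conv_rhs => rw [← orth_orth_interp f]
  rw [Valid, interpDual_cons, Set.add_subset_iff]
  exact ⟨fun h u hu y hy => add_comm y u ▸ h y hy u hu,
    fun h y hy u hu => add_comm u y ▸ h hu y hy⟩

section Rules

variable {f g : Fm α} {Γ Δ : Multiset (Fm α)}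

theorem valid_init (f : Fm α) : Valid B e {f, f.dual} :=
  valid_cons_iff.2 <| by simp [interpDual, Fm.dual_dual]

theorem Valid.cut (h₁ : Valid B e (f ::ₘ Γ)) (h₂ : Valid B e (f.dual ::ₘ Δ)) :
    Valid B e (Γ + Δ) := by
  rw [valid_cons_iff] at h₁ h₂
  rw [Valid, interpDual_add, Set.add_subset_iff]
  intro u hu w hw
  have hw' := h₂ hw
  rw [interp_dual] at hw'
  rw [add_comm]
  exact hw' u (h₁ hu)

theorem Valid.parr (h : Valid B e (f ::ₘ g ::ₘ Γ)) : Valid B e (.parr f g ::ₘ Γ) := by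
  rw [valid_cons_iff, interpDual_cons] at h
  refine valid_cons_iff.2 fun u hu => ?_
  rintro - ⟨a, ha, b, hb, rfl⟩
  have := ha _ (h (Set.add_mem_add hb hu))
  rwa [add_left_comm, add_comm u]

theorem Valid.tensor (h₁ : Valid B e (f ::ₘ Γ)) (h₂ : Valid B e (g ::ₘ Δ)) :
    Valid B e (.tensor f g ::ₘ (Γ + Δ)) := by
  rw [valid_cons_iff] at h₁ h₂ ⊢
  rw [interpDual_add]
  exact (Set.add_subset_add h₁ h₂).trans subset_orth_orth

theorem Valid.bot (h : Valid B e Γ) : Valid B e (.bot ::ₘ Γ) :=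
  valid_cons_iff.2 <| by rwa [interp, orth_singleton_zero]

theorem valid_one : Valid B e {(.one : Fm α)} :=
  valid_cons_iff.2 <| by
    rw [interpDual_zero, interp]
    exact subset_orth_orth

theorem Valid.wth (h₁ : Valid B e (f ::ₘ Γ)) (h₂ : Valid B e (g ::ₘ Γ)) :
    Valid B e (.wth f g ::ₘ Γ) := by
  rw [valid_cons_iff] at h₁ h₂ ⊢
  rw [interp, orth_union, orth_orth_interp, orth_orth_interp]
  exact Set.subset_inter h₁ h₂

theorem Valid.oplus₁ (h : Valid B e (f ::ₘ Γ)) (g : Fm α) : Valid B e (.oplus f g ::ₘ Γ) :=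
  valid_cons_iff.2 <| (valid_cons_iff.1 h).trans <| Set.subset_union_left.trans subset_orth_orth

theorem Valid.oplus₂ (h : Valid B e (g ::ₘ Γ)) (f : Fm α) : Valid B e (.oplus f g ::ₘ Γ) :=
  valid_cons_iff.2 <| (valid_cons_iff.1 h).trans <| Set.subset_union_right.trans subset_orth_orth

theorem valid_top (Γ : Multiset (Fm α)) : Valid B e (.top ::ₘ Γ) :=
  valid_cons_iff.2 <| by simp [interp, orth_empty]

theorem Valid.quest (h : Valid B e (f ::ₘ Γ)) : Valid B e (.quest f ::ₘ Γ) :=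
  valid_cons_iff.2 <| (valid_cons_iff.1 h).trans <|
    orth_orth_interp (B := B) (e := e) f ▸ orth_anti Set.inter_subset_right

theorem Valid.weaken (hB : ∀ m ∈ B, ∀ x, x + m ∈ B) (h : Valid B e Γ) (f : Fm α) :
    Valid B e (f ::ₘ Γ) := by
  rw [Valid, interpDual_cons, add_comm]
  exact add_subset_of_left_subset hB h

theorem Valid.contract (hB : ∀ m ∈ B, ∀ x, x + m ∈ B)
    (h : Valid B e (.quest f ::ₘ .quest f ::ₘ Γ)) : Valid B e (.quest f ::ₘ Γ) := by
  rw [Valid, interpDual_quest_cons] at h ⊢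
  by_cases h0 : 0 ∈ interp B e f.dual
  · rw [interp_bang_of_zero_mem hB h0] at h ⊢
    rwa [interpDual_quest_cons, interp_bang_of_zero_mem hB h0, ← add_assoc,
      Set.univ_add_univ] at h
  · rw [interp_bang_of_zero_notMem hB h0]
    exact add_subset_of_left_subset hB subset_rfl

theorem zero_mem_or_interpDual_subset (hB : ∀ m ∈ B, ∀ x, x + m ∈ B)
    (hΓ : ∀ g ∈ Γ, ∃ h, g = Fm.quest h) : 0 ∈ interpDual B e Γ ∨ interpDual B e Γ ⊆ B := by
  induction Γ using Multiset.induction with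
  | empty => exact .inl (by simp)
  | cons g Γ ih =>
    obtain ⟨f, rfl⟩ := hΓ g (Multiset.mem_cons_self g Γ)
    rw [interpDual_quest_cons]
    by_cases h0 : 0 ∈ interp B e f.dual
    · rw [interp_bang_of_zero_mem hB h0]
      rcases ih fun g hg => hΓ g (Multiset.mem_cons_of_mem hg) with h | h
      · exact .inl ⟨0, trivial, 0, h, zero_add 0⟩
      · rw [add_comm]
        exact .inr (add_subset_of_left_subset hB h)
    · rw [interp_bang_of_zero_notMem hB h0]
      exact .inr (add_subset_of_left_subset hB subset_rfl)

theorem Valid.bang (hB : ∀ m ∈ B, ∀ x, x + m ∈ B) (hΓ : ∀ g ∈ Γ, ∃ h, g = Fm.quest h)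
    (h : Valid B e (f ::ₘ Γ)) : Valid B e (.bang f ::ₘ Γ) := by
  rw [valid_cons_iff] at h ⊢
  rcases zero_mem_or_interpDual_subset hB hΓ with h0 | hS
  · rw [interp_bang_of_zero_mem hB (h h0)]
    exact Set.subset_univ _
  · refine hS.trans ?_
    by_cases h0 : 0 ∈ interp B e f
    · simp [interp_bang_of_zero_mem hB h0]
    · rw [interp_bang_of_zero_notMem hB h0]

end Rules

theorem LLWT.valid {T : Set (LAxiom α)} (hB : ∀ m ∈ B, ∀ x, x + m ∈ B)
    (hT : ∀ t ∈ T, Valid B e (axSeq t)) {Γ : Multiset (Fm α)} (h : LLWT T Γ) :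
    Valid B e Γ := by
  induction h with
  | init f => exact valid_init f
  | cut f _ _ ih₁ ih₂ => exact ih₁.cut ih₂
  | parr f g _ ih => exact ih.parr
  | tensor f g _ _ ih₁ ih₂ => exact ih₁.tensor ih₂
  | bot _ ih => exact ih.bot
  | one => exact valid_one
  | wth f g _ _ ih₁ ih₂ => exact ih₁.wth ih₂
  | oplus₁ f g _ ih => exact ih.oplus₁ g
  | oplus₂ f g _ ih => exact ih.oplus₂ f
  | top Γ => exact valid_top Γ
  | qD f _ ih => exact ih.quest
  | weak f _ ih => exact ih.weaken hB f
  | qC f _ ih => exact ih.contract hB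
  | qP f hΓ _ ih => exact ih.bang hB hΓ
  | ax ht => exact hT _ ht
  | dcut ht _ ih => exact (hT _ ht).cut ih

theorem interpDual_map_neg_subset (s : Multiset α) :
    interpDual B e (s.map Fm.neg) ⊆ orth B (orth B {(s.map e).sum}) := by
  induction s using Multiset.induction with
  | empty => simpa using subset_orth_orth (B := B) (X := {(0 : M)})
  | cons a s ih =>
    simp only [Multiset.map_cons, interpDual_cons, interp, Multiset.sum_cons,
      ← Set.singleton_add_singleton]
    exact (Set.add_subset_add_left ih).trans add_subset_orth_orth_add

theorem valid_axSeq {t : LAxiom α} (h : ((t.2 : Multiset α).map e).sum ∈ interp B e t.1) :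
    Valid B e (axSeq t) := by
  refine valid_cons_iff.2 ?_
  have hs := interpDual_map_neg_subset (B := B) (e := e) (t.2 : Multiset α)
  rw [Multiset.map_coe] at hs
  refine hs.trans ?_
  rw [← orth_orth_interp t.1]
  exact orth_orth_subset (Set.singleton_subset_iff.2 (by rwa [orth_orth_interp]))

theorem sum_map_mem_interpDual_map_neg (s : Multiset α) :
    (s.map e).sum ∈ interpDual B e (s.map Fm.neg) := by
  rw [interpDual, Multiset.map_map]
  exact Set.multiset_sum_mem_multiset_sum _ _ _ fun a _ => subset_orth_orth rfl

theorem zero_mem_interpDual_quests {s : Multiset α} (h : ∀ a ∈ s, e a ∈ B) :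
    0 ∈ interpDual B e (s.map fun a => .quest (.pos a)) := by
  have hmem (a : α) (ha : a ∈ s) : (0 : M) ∈ interp B e (Fm.quest (Fm.pos a)).dual :=
    subset_orth_orth ⟨rfl, by simpa [Fm.dual, interp, mem_orth] using h a ha⟩
  rw [interpDual, Multiset.map_map]
  simpa using Set.multiset_sum_mem_multiset_sum s _ (fun _ => (0 : M)) hmem

end Phase

section LLWT

variable {T : Set (LAxiom α)}

theorem LLWT.weaken_add (Δ : Multiset (Fm α)) {Γ : Multiset (Fm α)} (h : LLWT T Γ) :
    LLWT T (Δ + Γ) := by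
  induction Δ using Multiset.induction with
  | empty => simpa
  | cons f Δ ih => simpa using ih.weak f

theorem LLWT.contract_quests {S : Multiset (Fm α)} (hS : ∀ g ∈ S, ∃ h, g = .quest h)
    {Γ : Multiset (Fm α)} (h : LLWT T (S + S + Γ)) : LLWT T (S + Γ) := by
  induction S using Multiset.induction generalizing Γ with
  | empty => simpa using h
  | cons g S ih =>
    obtain ⟨f, rfl⟩ := hS g (Multiset.mem_cons_self g S)
    have hqq : LLWT T (.quest f ::ₘ .quest f ::ₘ (S + S + Γ)) := by
      simpa [Multiset.add_cons] using h
    simpa [Multiset.add_cons] using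
      ih (fun g hg => hS g (Multiset.mem_cons_of_mem hg)) (Γ := .quest f ::ₘ Γ)
        (by simpa [Multiset.add_cons] using hqq.qC f)

theorem LLWT.dcut_singleton {C : Fm α} {p : α} {Δ : Multiset (Fm α)} (ht : (C, [p]) ∈ T)
    (h : LLWT T (C.dual ::ₘ Δ)) : LLWT T (.neg p ::ₘ Δ) := by
  simpa using h.dcut ht

end LLWT

namespace Multiset

variable {β γ : Type*}

theorem map_eq_cons_of_injective [DecidableEq β] {f : β → γ} (hf : Function.Injective f)
    {s : Multiset β} {a : β} {t : Multiset γ} (h : s.map f = f a ::ₘ t) :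
    ∃ s', s = a ::ₘ s' ∧ t = s'.map f := by
  obtain ⟨b, hb, hba, rfl⟩ := (map_eq_cons f s t (f a)).2 h
  obtain rfl := hf hba
  exact ⟨s.erase b, (cons_erase hb).symm, rfl⟩

theorem map_eq_add [DecidableEq β] {f : β → γ} {s : Multiset β} {t₁ t₂ : Multiset γ}
    (h : s.map f = t₁ + t₂) : ∃ s₁ s₂, s = s₁ + s₂ ∧ t₁ = s₁.map f ∧ t₂ = s₂.map f := by
  induction t₁ using Multiset.induction generalizing s with
  | empty => exact ⟨0, s, by simp, by simp, by simpa using h.symm⟩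
  | cons c t₁ ih =>
    obtain ⟨b, hb, rfl, hs⟩ := (map_eq_cons f s _ c).2 (by rw [h, cons_add])
    obtain ⟨s₁, s₂, hs', rfl, rfl⟩ := ih hs
    exact ⟨b ::ₘ s₁, s₂, by rw [cons_add, ← hs', cons_erase hb], by simp, rfl⟩

theorem inl_cons_eq_inl_cons_map_inr {a a' : β} {m : Multiset (β ⊕ γ)} {s : Multiset γ}
    (h : .inl a ::ₘ m = .inl a' ::ₘ s.map .inr) : a = a' ∧ m = s.map .inr := by
  rcases cons_eq_cons.1 h with ⟨ha, hm⟩ | ⟨-, cs, -, hs⟩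
  · exact ⟨Sum.inl_injective ha, hm⟩
  · have : (.inl a : β ⊕ γ) ∈ s.map .inr := hs ▸ mem_cons_self _ _
    simp at this

end Multiset

section Counters

variable [Fintype ι] [DecidableEq ι]

def counters (v : ι → ℕ) : Multiset ι := ∑ i, Multiset.replicate (v i) i

@[simp]
theorem count_counters (v : ι → ℕ) (i : ι) : (counters v).count i = v i := by
  simp [counters, Multiset.count_sum', Multiset.count_replicate]

theorem counters_add (v w : ι → ℕ) : counters (v + w) = counters v + counters w :=
  Multiset.ext.2 fun i => by simp

theorem counters_zero : counters (0 : ι → ℕ) = 0 :=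
  Multiset.ext.2 fun i => by simp

theorem counters_add_single (v : ι → ℕ) (i : ι) :
    counters (v + Pi.single i 1) = i ::ₘ counters v :=
  Multiset.ext.2 fun j => by simp [Multiset.count_cons, Pi.single_apply]

end Counters

theorem count_cons_eq_add_single [DecidableEq ι] (i : ι) (s : Multiset ι) :
    ((i ::ₘ s).count ·) = (s.count ·) + Pi.single i 1 :=
  funext fun j => by simp [Multiset.count_cons, Pi.single_apply]

section Steps

variable {d : ℕ} {v w : Fin d → ℕ} {i : Fin d}

theorem add_unit_iff : (∀ j, (w j : ℤ) = v j + unit i j) ↔ w = v + Pi.single i 1 := by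
  simp only [funext_iff, Pi.add_apply, Pi.single_apply, unit]
  refine forall_congr' fun j => ?_
  split_ifs <;> omega

theorem add_neg_unit_iff : (∀ j, (w j : ℤ) = v j + (-unit i) j) ↔ v = w + Pi.single i 1 := by
  simp only [funext_iff, Pi.add_apply, Pi.neg_apply, Pi.single_apply, unit]
  refine forall_congr' fun j => ?_
  split_ifs <;> omega

theorem lossStep_iff [DecidableEq ι] {c c' : Config Q ι} :
    LossStep c c' ↔ c'.1 = c.1 ∧ ∃ i, c.2 = c'.2 + Pi.single i 1 := by
  simp only [LossStep, funext_iff, Pi.add_apply, Pi.single_apply]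
  refine and_congr_right' (exists_congr fun i => ⟨fun ⟨hi, hj⟩ j => ?_, fun h => ?_⟩)
  · by_cases hji : j = i
    · simp [hji, hi]
    · simp [hji, hj j hji]
  · exact ⟨by simpa using h i, fun j hji => by simpa [hji] using h j⟩

end Steps

inductive Derives (step₁ : Config Q ι → Config Q ι → Prop)
    (step₂ : Config Q ι → Config Q ι → Config Q ι → Prop) (final : Config Q ι → Prop) :
    Config Q ι → Prop
  | leaf {c} : final c → Derives step₁ step₂ final c
  | one {c c'} : step₁ c c' → Derives step₁ step₂ final c' → Derives step₁ step₂ final c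
  | two {c c₁ c₂} : step₂ c c₁ c₂ → Derives step₁ step₂ final c₁ →
      Derives step₁ step₂ final c₂ → Derives step₁ step₂ final c

theorem exists_validTree_iff_derives {step₁ : Config Q ι → Config Q ι → Prop}
    {step₂ : Config Q ι → Config Q ι → Config Q ι → Prop} {final : Config Q ι → Prop}
    {c : Config Q ι} :
    (∃ D, ValidTree step₁ step₂ D ∧ D.root = c ∧ ∀ l ∈ D.leaves, final l) ↔
      Derives step₁ step₂ final c := by
  constructor
  · rintro ⟨D, hD, rfl, hfinal⟩
    induction hD with
    | leaf c => exact .leaf (hfinal c (List.mem_singleton_self c))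
    | one h _ ih => exact .one h (ih hfinal)
    | two h _ _ ih₁ ih₂ =>
      exact .two h (ih₁ fun l hl => hfinal l (List.mem_append_left _ hl))
        (ih₂ fun l hl => hfinal l (List.mem_append_right _ hl))
  · intro h
    induction h with
    | @leaf c h => exact ⟨.leaf c, .leaf c, rfl, by simpa [DTree.leaves]⟩
    | @one c _ h _ ih =>
      obtain ⟨D, hD, rfl, hfinal⟩ := ih
      exact ⟨.node1 c D, .one h hD, rfl, hfinal⟩
    | @two c _ _ h _ _ ih₁ ih₂ =>
      obtain ⟨D₁, hD₁, rfl, hfinal₁⟩ := ih₁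
      obtain ⟨D₂, hD₂, rfl, hfinal₂⟩ := ih₂
      refine ⟨.node2 c D₁ D₂, .two h hD₁ hD₂, rfl, fun l hl => ?_⟩
      rcases List.mem_append.1 hl with hl | hl
      exacts [hfinal₁ l hl, hfinal₂ l hl]

/-- The lossy root judgement `A, L ▷ₗ q, v` of an ordinary ABVASS. -/
inductive LossyReach {d : ℕ} (A : ABVASS Q (Fin d)) (L : Finset Q) : Q → (Fin d → ℕ) → Prop
  | final {q} : q ∈ L → LossyReach A L q 0
  | inc {q q₁ i v} : (q, unit i, q₁) ∈ A.Tu →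
      LossyReach A L q₁ (v + Pi.single i 1) → LossyReach A L q v
  | dec {q q₁ i v} : (q, -unit i, q₁) ∈ A.Tu →
      LossyReach A L q₁ v → LossyReach A L q (v + Pi.single i 1)
  | loss {q i v} : LossyReach A L q v → LossyReach A L q (v + Pi.single i 1)
  | fork {q q₁ q₂ v} : (q, q₁, q₂) ∈ A.Tf →
      LossyReach A L q₁ v → LossyReach A L q₂ v → LossyReach A L q v
  | split {q q₁ q₂ v₁ v₂} : (q, q₁, q₂) ∈ A.Ts →
      LossyReach A L q₁ v₁ → LossyReach A L q₂ v₂ → LossyReach A L q (v₁ + v₂)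

section LossyReach

variable {d : ℕ} {A : ABVASS Q (Fin d)} {L : Finset Q}

theorem Derives.lossyReach (hord : Ordinary A) {c : Config Q (Fin d)}
    (h : Derives (fun c c' => UnaryStep A c c' ∨ LossStep c c') (BinStep A)
      (fun l => l.1 ∈ L ∧ l.2 = fun _ => 0) c) : LossyReach A L c.1 c.2 := by
  induction h with
  | leaf h =>
    obtain ⟨hq, h0⟩ := h
    exact h0 ▸ .final hq
  | one h _ ih =>
    rcases h with ⟨u, hu, hv⟩ | h
    · obtain ⟨i, rfl | rfl⟩ := hord _ hu
      · exact .inc hu (add_unit_iff.1 hv ▸ ih)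
      · exact add_neg_unit_iff.1 hv ▸ .dec hu ih
    · obtain ⟨hq, i, hv⟩ := lossStep_iff.1 h
      exact hv ▸ .loss (hq ▸ ih)
  | two h _ _ ih₁ ih₂ =>
    rcases h with ⟨hf, h₁, h₂⟩ | ⟨hs, hv⟩
    · exact .fork hf (h₁ ▸ ih₁) (h₂ ▸ ih₂)
    · exact hv ▸ .split hs ih₁ ih₂

theorem LossyReach.derives {q : Q} {v : Fin d → ℕ} (h : LossyReach A L q v) :
    Derives (fun c c' => UnaryStep A c c' ∨ LossStep c c') (BinStep A)
      (fun l => l.1 ∈ L ∧ l.2 = fun _ => 0) (q, v) := by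
  induction h with
  | final hq => exact .leaf ⟨hq, rfl⟩
  | inc h _ ih => exact .one (.inl ⟨_, h, add_unit_iff.2 rfl⟩) ih
  | dec h _ ih => exact .one (.inl ⟨_, h, add_neg_unit_iff.2 rfl⟩) ih
  | @loss q i v _ ih => exact .one (c' := (q, v)) (.inr (lossStep_iff.2 ⟨rfl, i, rfl⟩)) ih
  | fork h _ _ ih₁ ih₂ => exact .two (c₁ := (_, _)) (c₂ := (_, _)) (.inl ⟨h, rfl, rfl⟩) ih₁ ih₂
  | split h _ _ ih₁ ih₂ => exact .two (c₁ := (_, _)) (c₂ := (_, _)) (.inr ⟨h, rfl⟩) ih₁ ih₂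

end LossyReach

section Encoding

variable {d : ℕ}

theorem theta_eq (q : Q) (v : Fin d → ℕ) :
    theta q v = Fm.neg (.inl q) ::ₘ (counters v).map (Fm.neg ∘ .inr) := by
  rw [theta, counters, ← Multiset.coe_mapAddMonoidHom, map_sum]
  simp [Multiset.map_replicate]

theorem theta_add_eq (q : Q) (v : Fin d → ℕ) (Γ : Multiset (Fm (Q ⊕ Fin d))) :
    theta q v + Γ = Fm.neg (.inl q) ::ₘ ((counters v).map (Fm.neg ∘ .inr) + Γ) := by
  rw [theta_eq, Multiset.cons_add]

theorem theta_add_single_add_eq (q : Q) (v : Fin d → ℕ) (i : Fin d)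
    (Γ : Multiset (Fm (Q ⊕ Fin d))) :
    theta q (v + Pi.single i 1) + Γ =
      Fm.neg (.inl q) ::ₘ Fm.neg (.inr i) ::ₘ ((counters v).map (Fm.neg ∘ .inr) + Γ) := by
  rw [theta_add_eq, counters_add_single, Multiset.map_cons, Multiset.cons_add]
  rfl

end Encoding

section Forward

variable {d : ℕ} {A : ABVASS Q (Fin d)} {L : Finset Q}

theorem LossyReach.llwt {Γ : Multiset (Fm (Q ⊕ Fin d))} (hΓ : ∀ g ∈ Γ, ∃ f, g = .quest f)
    (hL : ∀ q ∈ L, .quest (.pos (.inl q)) ∈ Γ) {q : Q} {v : Fin d → ℕ}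
    (h : LossyReach A L q v) : LLWT (thAx A) (theta q v + Γ) := by
  induction h with
  | @final q hq =>
    obtain ⟨Γ', rfl⟩ := Multiset.exists_cons_of_mem (hL q hq)
    have := ((LLWT.init (T := thAx A) (.pos (.inl q))).qD _).weaken_add Γ'
    rw [theta_eq, counters_zero]
    convert this using 1
    simp [Fm.dual, add_comm]
  | @inc q q₁ i v hu _ ih =>
    rw [theta_add_single_add_eq] at ih
    rw [theta_add_eq]
    exact .dcut_singleton (Or.inl ⟨q, i, q₁, hu, rfl⟩) (.parr _ _ ih)
  | @dec q q₁ i v hu _ ih =>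
    have ax : (Fm.pos (.inl q₁), [.inl q, .inr i]) ∈ thAx A :=
      Or.inr (Or.inl ⟨q, i, q₁, hu, rfl⟩)
    rw [theta_add_eq] at ih
    simpa [theta_add_single_add_eq, ← Multiset.cons_coe] using ih.dcut ax
  | @loss q i v _ ih =>
    rw [theta_add_eq] at ih
    rw [theta_add_single_add_eq, Multiset.cons_swap]
    exact ih.weak _
  | @fork q q₁ q₂ v hf _ _ ih₁ ih₂ =>
    rw [theta_add_eq] at ih₁ ih₂ ⊢
    exact .dcut_singleton (Or.inr (Or.inr (Or.inl ⟨q, q₁, q₂, hf, rfl⟩))) (ih₁.wth _ _ ih₂)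
  | @split q q₁ q₂ v₁ v₂ hs _ _ ih₁ ih₂ =>
    rw [theta_add_eq] at ih₁ ih₂ ⊢
    refine .dcut_singleton (Or.inr (Or.inr (Or.inr ⟨q, q₁, q₂, hs, rfl⟩))) ?_
    have := LLWT.contract_quests hΓ (Γ := Fm.tensor (.neg (.inl q₁)) (.neg (.inl q₂)) ::ₘ
      ((counters v₁).map (Fm.neg ∘ .inr) + (counters v₂).map (Fm.neg ∘ .inr)))
      (by convert ih₁.tensor _ _ ih₂ using 1; simp only [← Multiset.singleton_add]; abel)
    convert this using 1
    simp only [Fm.dual, counters_add, Multiset.map_add, ← Multiset.singleton_add]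
    abel

end Forward

section Backward

variable {d : ℕ}

inductive AtomDerivable (A : ABVASS Q (Fin d)) (L : Finset Q) : Multiset (Q ⊕ Fin d) → Prop
  | final {q} : q ∈ L → AtomDerivable A L {.inl q}
  | weak (x) {m} : AtomDerivable A L m → AtomDerivable A L (x ::ₘ m)
  | inc {q i q₁ m} : (q, unit i, q₁) ∈ A.Tu →
      AtomDerivable A L (.inl q₁ ::ₘ .inr i ::ₘ m) → AtomDerivable A L (.inl q ::ₘ m)
  | dec {q i q₁ m} : (q, -unit i, q₁) ∈ A.Tu →
      AtomDerivable A L (.inl q₁ ::ₘ m) → AtomDerivable A L (.inl q ::ₘ .inr i ::ₘ m)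
  | fork {q q₁ q₂ m} : (q, q₁, q₂) ∈ A.Tf → AtomDerivable A L (.inl q₁ ::ₘ m) →
      AtomDerivable A L (.inl q₂ ::ₘ m) → AtomDerivable A L (.inl q ::ₘ m)
  | split {q q₁ q₂ m₁ m₂} : (q, q₁, q₂) ∈ A.Ts → AtomDerivable A L (.inl q₁ ::ₘ m₁) →
      AtomDerivable A L (.inl q₂ ::ₘ m₂) → AtomDerivable A L (.inl q ::ₘ (m₁ + m₂))

variable {A : ABVASS Q (Fin d)} {L : Finset Q} {m : Multiset (Q ⊕ Fin d)}

theorem AtomDerivable.weaken_add (h : AtomDerivable A L m) (x : Multiset (Q ⊕ Fin d)) :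
    AtomDerivable A L (x + m) := by
  induction x using Multiset.induction with
  | empty => simpa
  | cons a x ih => simpa using ih.weak a

theorem AtomDerivable.exists_inl_mem (h : AtomDerivable A L m) : ∃ q, .inl q ∈ m := by
  induction h with
  | @final q _ | @inc q _ _ _ _ _ _ | @dec q _ _ _ _ _ _ | @fork q _ _ _ _ _ _ _ _
  | @split q _ _ _ _ _ _ _ _ _ => exact ⟨q, Multiset.mem_cons_self _ _⟩
  | weak x _ ih => exact ih.imp fun q => Multiset.mem_cons_of_mem

theorem valid_thAx {t : LAxiom (Q ⊕ Fin d)} (ht : t ∈ thAx A) :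
    Valid {m | AtomDerivable A L m} (fun a => {a}) (axSeq t) := by
  refine valid_axSeq ?_
  rcases ht with ⟨q, i, q₁, hu, rfl⟩ | ⟨q, i, q₁, hu, rfl⟩ | ⟨q, q₁, q₂, hf, rfl⟩ |
    ⟨q, q₁, q₂, hs, rfl⟩
  · simp only [interp, orth_orth_orth_add_orth_orth, Set.singleton_add_singleton,
      mem_orth_orth_singleton]
    intro z (hz : AtomDerivable A L _)
    rw [add_comm, add_assoc, Multiset.singleton_add, Multiset.singleton_add] at hz
    simpa using AtomDerivable.inc hu hz
  · simp only [interp, mem_orth_orth_singleton]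
    intro z (hz : AtomDerivable A L _)
    rw [add_comm, Multiset.singleton_add] at hz
    simpa using AtomDerivable.dec hu hz
  · simp only [interp, orth_union, orth_orth_orth]
    rintro z ⟨hz₁, hz₂⟩
    have h₁ : AtomDerivable A L (z + {.inl q₁}) := hz₁ _ rfl
    have h₂ : AtomDerivable A L (z + {.inl q₂}) := hz₂ _ rfl
    rw [add_comm, Multiset.singleton_add] at h₁ h₂
    simpa using AtomDerivable.fork hf h₁ h₂
  · simp only [interp, orth_orth_orth]
    rintro - ⟨a, ha, b, hb, rfl⟩
    have h₁ : AtomDerivable A L (a + {.inl q₁}) := ha _ rfl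
    have h₂ : AtomDerivable A L (b + {.inl q₂}) := hb _ rfl
    rw [add_comm, Multiset.singleton_add] at h₁ h₂
    simpa using AtomDerivable.split hs h₁ h₂

theorem AtomDerivable.lossyReach (h : AtomDerivable A L m) {q : Q} {s : Multiset (Fin d)}
    (hm : m = .inl q ::ₘ s.map .inr) : LossyReach A L q (s.count ·) := by
  induction h generalizing q s with
  | final hq =>
    obtain ⟨rfl, hs⟩ := Multiset.inl_cons_eq_inl_cons_map_inr hm
    obtain rfl : s = 0 := Multiset.map_eq_zero.1 hs.symm
    convert LossyReach.final hq using 1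
    ext
    simp
  | weak x h ih =>
    rcases x with q' | i
    · obtain ⟨-, rfl⟩ := Multiset.inl_cons_eq_inl_cons_map_inr hm
      obtain ⟨_, hq⟩ := h.exists_inl_mem
      simp at hq
    · rcases Multiset.cons_eq_cons.1 hm with ⟨h', -⟩ | ⟨-, cs, rfl, hs⟩
      · cases h'
      · obtain ⟨s', rfl, rfl⟩ := Multiset.map_eq_cons_of_injective Sum.inr_injective hs
        rw [count_cons_eq_add_single]
        exact (ih rfl).loss
  | @inc _ i q₁ _ hu _ ih =>
    obtain ⟨rfl, rfl⟩ := Multiset.inl_cons_eq_inl_cons_map_inr hm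
    have := ih (q := q₁) (s := i ::ₘ s) (by simp)
    rw [count_cons_eq_add_single] at this
    exact .inc hu this
  | dec hu _ ih =>
    obtain ⟨rfl, hs⟩ := Multiset.inl_cons_eq_inl_cons_map_inr hm
    obtain ⟨s', rfl, rfl⟩ := Multiset.map_eq_cons_of_injective Sum.inr_injective hs.symm
    rw [count_cons_eq_add_single]
    exact .dec hu (ih rfl)
  | fork hf _ _ ih₁ ih₂ =>
    obtain ⟨rfl, rfl⟩ := Multiset.inl_cons_eq_inl_cons_map_inr hm
    exact .fork hf (ih₁ rfl) (ih₂ rfl)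
  | split hs _ _ ih₁ ih₂ =>
    obtain ⟨rfl, hm'⟩ := Multiset.inl_cons_eq_inl_cons_map_inr hm
    obtain ⟨s₁, s₂, rfl, rfl, rfl⟩ := Multiset.map_eq_add hm'.symm
    have hcount : ((s₁ + s₂).count ·) = (s₁.count ·) + (s₂.count ·) :=
      funext fun j => Multiset.count_add j s₁ s₂
    rw [hcount]
    exact .split hs (ih₁ rfl) (ih₂ rfl)

theorem inl_cons_counters_mem_interpDual (q : Q) (v : Fin d → ℕ) :
    .inl q ::ₘ (counters v).map .inr ∈ interpDual {m | AtomDerivable A L m} (fun a => {a})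
      (theta q v + L.val.map fun ql => Fm.quest (Fm.pos (.inl ql))) := by
  have htheta : theta q v = (.inl q ::ₘ (counters v).map .inr).map Fm.neg := by
    simp [theta_eq]
  have hquests : (L.val.map fun ql => Fm.quest (Fm.pos (.inl ql : Q ⊕ Fin d))) =
      (L.val.map .inl).map fun a => Fm.quest (Fm.pos a) := by
    simp
  have h₁ := sum_map_mem_interpDual_map_neg (B := {m | AtomDerivable A L m})
    (e := fun a => ({a} : Multiset (Q ⊕ Fin d))) (.inl q ::ₘ (counters v).map .inr)
  have h₂ := zero_mem_interpDual_quests (B := {m | AtomDerivable A L m})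
    (e := fun a => ({a} : Multiset (Q ⊕ Fin d))) (s := L.val.map .inl)
    (by simpa using fun ql hql => AtomDerivable.final hql)
  rw [Multiset.sum_map_singleton] at h₁
  rw [interpDual_add, htheta, hquests]
  simpa using Set.add_mem_add h₁ h₂

theorem LLWT.lossyReach {q : Q} {v : Fin d → ℕ}
    (h : LLWT (thAx A) (theta q v + L.val.map fun ql => Fm.quest (Fm.pos (.inl ql)))) :
    LossyReach A L q v := by
  have hpole := h.valid (B := {m | AtomDerivable A L m})
    (fun m (hm : AtomDerivable A L m) x => hm.weaken_add x) fun t ht => valid_thAx ht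
  simpa using (hpole (inl_cons_counters_mem_interpDual q v)).lossyReach rfl

end Backward

theorem abvass_lossy_reach_iff_llwt_general {Q : Type} {d : ℕ}
    (A : ABVASS Q (Fin d)) (hord : Ordinary A)
    (Qℓ : Finset Q) (q : Q) (v : Fin d → ℕ) :
    (∃ D : DTree Q (Fin d),
        ValidTree (fun c c' => UnaryStep A c c' ∨ LossStep c c') (BinStep A) D ∧
        D.root = (q, v) ∧
        ∀ l ∈ D.leaves, l.1 ∈ Qℓ ∧ l.2 = (fun _ => 0)) ↔
    LLWT (thAx A)
      (theta q v +
        Multiset.map (fun ql => Fm.quest (Fm.pos (Sum.inl ql))) Qℓ.val) :=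
  exists_validTree_iff_derives.trans
    ⟨fun h => (h.lossyReach hord).llwt (by simp)
      fun _ hq => Multiset.mem_map_of_mem (fun ql => Fm.quest (Fm.pos (Sum.inl ql))) hq,
      fun h => h.lossyReach.derives⟩

/-- For an ordinary ABVASS `A` (no full zero tests) and all configurations
`(q, v)`, the root judgement `A, Q_ℓ ▷_ℓ q, v` holds under the lossy
semantics iff the sequent `⊢ θ(q, v), ?Q_ℓ` is provable in LLW+T(A). -/
theorem abvass_lossy_reach_iff_llwt {Q : Type} [Fintype Q] {d : ℕ}
    (A : ABVASS Q (Fin d)) (hz : A.Tz = ∅) (hord : Ordinary A)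
    (Qℓ : Finset Q) (q : Q) (v : Fin d → ℕ) :
    (∃ D : DTree Q (Fin d),
        ValidTree (fun c c' => UnaryStep A c c' ∨ LossStep c c') (BinStep A) D ∧
        D.root = (q, v) ∧
        ∀ l ∈ D.leaves, l.1 ∈ Qℓ ∧ l.2 = (fun _ => 0)) ↔
    LLWT (thAx A)
      (theta q v +
        Multiset.map (fun ql => Fm.quest (Fm.pos (Sum.inl ql))) Qℓ.val) :=
  abvass_lossy_reach_iff_llwt_general A hord Qℓ q v
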